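/- Let B be a commutative Banach algebra and A a closed ideal in B such that A ⊗̂ B is weakly amenable. Then A is weakly amenable. -/

import Mathlib

open Filter Topology MulOpposite

/-- A Banach `A`-bimodule structure on the Banach space `X`:
`L a x = a • x` (left action), `R a x = x • a` (right action),
given as continuous bilinear maps. -/
structure BanachBimodule (A X : Type*) [NonUnitalNormedRing A] [NormedSpace ℂ A]
    [NormedAddCommGroup X] [NormedSpace ℂ X] where
  L : A →L[ℂ] X →L[ℂ] X
  R : A →L[ℂ] X →L[ℂ] X
  L_mul : ∀ a b : A, L (a * b) = (L a).comp (L b)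
  R_mul : ∀ a b : A, R (a * b) = (R b).comp (R a)
  LR_comm : ∀ (a b : A) (x : X), R b (L a x) = L a (R b x)

/-- `D : A → X*` is a derivation into the dual Banach bimodule of `X`, written
pointwise: `D(ab) = a·D(b) + D(a)·b` where `(a·f)(x) = f(x·a)`, `(f·a)(x) = f(a·x)`. -/
def IsDualDerivation {A X : Type*} [NonUnitalNormedRing A] [NormedSpace ℂ A]
    [NormedAddCommGroup X] [NormedSpace ℂ X] (σ : BanachBimodule A X)
    (D : A →L[ℂ] (X →L[ℂ] ℂ)) : Prop :=
  ∀ (a b : A) (x : X), D (a * b) x = D b (σ.R a x) + D a (σ.L b x)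

/-- `D` is inner: `D a = a·f − f·a` for some `f ∈ X*`. -/
def IsInnerDualDerivation {A X : Type*} [NonUnitalNormedRing A] [NormedSpace ℂ A]
    [NormedAddCommGroup X] [NormedSpace ℂ X] (σ : BanachBimodule A X)
    (D : A →L[ℂ] (X →L[ℂ] ℂ)) : Prop :=
  ∃ f : X →L[ℂ] ℂ, ∀ (a : A) (x : X), D a x = f (σ.R a x) - f (σ.L a x)

/-- A Banach algebra is amenable if every continuous derivation into every dual
Banach bimodule is inner. -/
def Amenable (A : Type*) [NonUnitalNormedRing A] [NormedSpace ℂ A] : Prop :=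
  ∀ (X : Type) (_ : NormedAddCommGroup X) (_ : NormedSpace ℂ X) (_ : CompleteSpace X)
    (σ : BanachBimodule A X) (D : A →L[ℂ] (X →L[ℂ] ℂ)),
    IsDualDerivation σ D → IsInnerDualDerivation σ D

/-- Weak amenability: every continuous derivation `D : A → A*` into the dual
bimodule (`(a·f)(x) = f(xa)`, `(f·a)(x) = f(ax)`) is inner. -/
def WeaklyAmenable (A : Type*) [NonUnitalNormedRing A] [NormedSpace ℂ A] : Prop :=
  ∀ D : A →L[ℂ] (A →L[ℂ] ℂ),
    (∀ a b x : A, D (a * b) x = D b (x * a) + D a (b * x)) →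
    ∃ f : A →L[ℂ] ℂ, ∀ a x : A, D a x = f (x * a) - f (a * x)

/-- A bounded net in a normed space. -/
structure BddNet (X : Type*) [Norm X] where
  ι : Type
  [dir : SemilatticeSup ι]
  [ne : Nonempty ι]
  z : ι → X
  C : ℝ
  bdd : ∀ i, ‖z i‖ ≤ C

/-- The `atTop` filter of the (directed) index of a bounded net. -/
def BddNet.filter {X : Type*} [Norm X] (S : BddNet X) : Filter S.ι :=
  letI := S.dir; Filter.atTop

/-- The bounded net `S` is a two-sided bounded approximate identity for `A`. -/
def IsBAI {A : Type*} [NonUnitalNormedRing A] (S : BddNet A) : Prop :=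
  ∀ a : A, Tendsto (fun i => a * S.z i) S.filter (nhds a) ∧
           Tendsto (fun i => S.z i * a) S.filter (nhds a)

/-- `A` has a (two-sided) bounded approximate identity. -/
def HasBAI (A : Type*) [NonUnitalNormedRing A] : Prop := ∃ S : BddNet A, IsBAI S

/-- `T`, together with the continuous bilinear map `ι`, is (a realization of) the
projective tensor product `A ⊗̂ B` of the Banach algebras `A` and `B`:
`ι` is multiplicative ((a⊗b)(c⊗d) = ac⊗bd), satisfies the cross-norm estimate,
has dense linear span, and has the universal (norm-decreasing lifting) property
of the projective tensor norm. -/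
structure IsProjTensorProduct (A B T : Type*)
    [NonUnitalNormedRing A] [NormedSpace ℂ A] [NonUnitalNormedRing B] [NormedSpace ℂ B]
    [NonUnitalNormedRing T] [NormedSpace ℂ T] [CompleteSpace T] where
  ι : A →L[ℂ] B →L[ℂ] T
  norm_ι : ∀ a b, ‖ι a b‖ ≤ ‖a‖ * ‖b‖
  ι_mul : ∀ (a c : A) (b d : B), ι a b * ι c d = ι (a * c) (b * d)
  dense_span : Dense (Submodule.span ℂ (Set.range fun p : A × B => ι p.1 p.2) : Set T)
  lift : ∀ (E : Type) (_ : NormedAddCommGroup E) (_ : NormedSpace ℂ E) (_ : CompleteSpace E)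
    (φ : A →L[ℂ] B →L[ℂ] E), ∃ Φ : T →L[ℂ] E, (∀ a b, Φ (ι a b) = φ a b) ∧ ‖Φ‖ ≤ ‖φ‖

/-!
Since `B` is commutative and `j` is injective, `A` and hence `A ⊗̂ B` are commutative, so every
derivation of `A ⊗̂ B` into its dual vanishes. The bilinear map `(a, b) ↦ b • a` induces a
homomorphism `φ : A ⊗̂ B → A`, and a derivation `D : A → A*` pulls back to the derivation
`φ* ∘ D ∘ φ`, so `D` vanishes on the range of `φ`. That range is dense: a functional `μ` vanishing
on it kills `A²`, so for every `β ∈ B*` the functional `μ ⊗ β` kills `(A ⊗̂ B)²`; in a weakly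
amenable commutative algebra such a functional `l` is zero, because `t ↦ l t • l` is a derivation.
-/

open ContinuousLinearMap

namespace WeaklyAmenable

variable {C : Type*} [NonUnitalNormedRing C] [NormedSpace ℂ C]

theorem eq_zero_of_mul_comm (hC : WeaklyAmenable C) (hcomm : ∀ s t : C, s * t = t * s)
    {D : C →L[ℂ] C →L[ℂ] ℂ} (hD : ∀ a b x : C, D (a * b) x = D b (x * a) + D a (b * x)) :
    D = 0 := by
  obtain ⟨f, hf⟩ := hC D hD
  ext a x
  simp [hf, hcomm x a]

theorem dual_eq_zero_of_map_mul_eq_zero (hC : WeaklyAmenable C) (hcomm : ∀ s t : C, s * t = t * s)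
    {l : C →L[ℂ] ℂ} (hl : ∀ s t, l (s * t) = 0) : l = 0 := by
  have hD := hC.eq_zero_of_mul_comm hcomm (D := l.smulRight l) (fun a b x => by simp [hl])
  ext t
  simpa using congr($hD t t)

end WeaklyAmenable

namespace IsProjTensorProduct

variable {A B T : Type*} [NonUnitalNormedRing A] [NormedSpace ℂ A] [NonUnitalNormedRing B]
  [NormedSpace ℂ B] [NonUnitalNormedRing T] [NormedSpace ℂ T] [CompleteSpace T]
  (P : IsProjTensorProduct A B T)

include P in
theorem ext {E : Type*} [TopologicalSpace E] [AddCommMonoid E] [Module ℂ E] [T2Space E]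
    {f g : T →L[ℂ] E} (h : ∀ a b, f (P.ι a b) = g (P.ι a b)) : f = g :=
  ContinuousLinearMap.ext_on P.dense_span (by rintro _ ⟨p, rfl⟩; exact h p.1 p.2)

include P in
theorem ext₂ {E : Type*} [TopologicalSpace E] [AddCommGroup E] [Module ℂ E] [T2Space E]
    [IsTopologicalAddGroup E] [ContinuousConstSMul ℂ E]
    {M N : T →L[ℂ] T →L[ℂ] E} (h : ∀ a b c d, M (P.ι a b) (P.ι c d) = N (P.ι a b) (P.ι c d)) :
    M = N :=
  P.ext fun a b => P.ext (h a b)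

noncomputable def liftDual : (A →L[ℂ] B →L[ℂ] ℂ) →L[ℂ] T →L[ℂ] ℂ :=
  have L := fun φ => P.lift ℂ inferInstance inferInstance inferInstance φ
  LinearMap.mkContinuous
    { toFun := fun φ => (L φ).choose
      map_add' := fun φ ψ => P.ext fun a b => by
        simp [(L (φ + ψ)).choose_spec.1, (L φ).choose_spec.1, (L ψ).choose_spec.1]
      map_smul' := fun c φ => P.ext fun a b => by
        simp [(L (c • φ)).choose_spec.1, (L φ).choose_spec.1] }
    1 fun φ => by simpa using (L φ).choose_spec.2

@[simp]
theorem liftDual_ι (φ : A →L[ℂ] B →L[ℂ] ℂ) (a : A) (b : B) : P.liftDual φ (P.ι a b) = φ a b :=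
  (P.lift ℂ inferInstance inferInstance inferInstance φ).choose_spec.1 a b

section Dual

variable {E : Type*} [NormedAddCommGroup E] [NormedSpace ℂ E]

/-- The transpose `φ*` of the map `φ : A ⊗̂ B → E`, `a ⊗ b ↦ ψ a b`. The map `φ` itself cannot be
formed, since `IsProjTensorProduct.lift` only targets spaces in `Type`; density of its range is
expressed as injectivity of `dualMap`. -/
noncomputable def dualMap (ψ : A →L[ℂ] B →L[ℂ] E) : (E →L[ℂ] ℂ) →L[ℂ] T →L[ℂ] ℂ :=
  P.liftDual ∘L (compL ℂ A (B →L[ℂ] E) (B →L[ℂ] ℂ)).flip ψ ∘L compL ℂ B E ℂ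

@[simp]
theorem dualMap_ι (ψ : A →L[ℂ] B →L[ℂ] E) (f : E →L[ℂ] ℂ) (a : A) (b : B) :
    P.dualMap ψ f (P.ι a b) = f (ψ a b) := by
  simp [dualMap]

noncomputable def pullbackForm (ψ : A →L[ℂ] B →L[ℂ] E) (D : E →L[ℂ] E →L[ℂ] ℂ) :
    T →L[ℂ] T →L[ℂ] ℂ :=
  (P.dualMap ψ ∘L (P.dualMap ψ ∘L D).flip).flip

@[simp]
theorem pullbackForm_ι_ι (ψ : A →L[ℂ] B →L[ℂ] E) (D : E →L[ℂ] E →L[ℂ] ℂ) (a x : A) (b y : B) :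
    P.pullbackForm ψ D (P.ι a b) (P.ι x y) = D (ψ a b) (ψ x y) := by
  simp [pullbackForm]

end Dual

section Mul

variable [IsScalarTower ℂ T T] [SMulCommClass ℂ T T]

include P in
theorem mul_comm (hA : ∀ a c : A, a * c = c * a) (hB : ∀ b d : B, b * d = d * b) (s t : T) :
    s * t = t * s := by
  have := P.ext₂ (M := mul ℂ T) (N := (mul ℂ T).flip) fun a b c d => by
    simp [P.ι_mul, hA a, hB b]
  simpa using congr($this s t)

include P in
theorem dualDerivation_of_ι (D : T →L[ℂ] T →L[ℂ] ℂ)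
    (h : ∀ a b c d x y, D (P.ι a b * P.ι c d) (P.ι x y) =
      D (P.ι c d) (P.ι x y * P.ι a b) + D (P.ι a b) (P.ι c d * P.ι x y))
    (s t u : T) : D (s * t) u = D t (u * s) + D s (t * u) := by
  have h₁ : ∀ a b c d u, D (P.ι a b * P.ι c d) u =
      D (P.ι c d) (u * P.ι a b) + D (P.ι a b) (P.ι c d * u) := fun a b c d u => by
    have := P.ext (f := D (P.ι a b * P.ι c d))
      (g := D (P.ι c d) ∘L (mul ℂ T).flip (P.ι a b) + D (P.ι a b) ∘L mul ℂ T (P.ι c d))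
      (by simpa using h a b c d)
    simpa using congr($this u)
  have h₂ : ∀ a b t u, D (P.ι a b * t) u = D t (u * P.ι a b) + D (P.ι a b) (t * u) :=
    fun a b t u => by
    have := P.ext (f := D.flip u ∘L mul ℂ T (P.ι a b))
      (g := D.flip (u * P.ι a b) + D (P.ι a b) ∘L (mul ℂ T).flip u)
      (by simpa using h₁ a b · · u)
    simpa using congr($this t)
  have := P.ext (f := D.flip u ∘L (mul ℂ T).flip t) (g := D t ∘L mul ℂ T u + D.flip (t * u))
    (by simpa using h₂ · · t u)
  simpa using congr($this s)

theorem weaklyAmenable_of_injective_dualMap (hT : WeaklyAmenable T)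
    (hTcomm : ∀ s t : T, s * t = t * s) {E : Type*} [NonUnitalNormedRing E] [NormedSpace ℂ E]
    (ψ : A →L[ℂ] B →L[ℂ] E) (hψ : ∀ a b c d, ψ (a * c) (b * d) = ψ a b * ψ c d)
    (hinj : Function.Injective (P.dualMap ψ)) : WeaklyAmenable E := by
  intro D hD
  suffices D = 0 from ⟨0, by simp [this]⟩
  have hDhat : P.pullbackForm ψ D = 0 := hT.eq_zero_of_mul_comm hTcomm <|
    P.dualDerivation_of_ι _ fun a b c d x y => by simp [P.ι_mul, hψ, hD]
  have hDψ : ∀ a b, D (ψ a b) = 0 := fun a b =>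
    hinj <| P.ext fun x y => by simpa using congr($hDhat (P.ι a b) (P.ι x y))
  ext e x
  have : D.flip x = 0 := hinj <| P.ext fun a b => by simp [hDψ]
  simpa using congr($this e)

end Mul

end IsProjTensorProduct

section IdealAction

variable {A B : Type*} [NonUnitalNormedRing A] [NormedSpace ℂ A] [NonUnitalNormedRing B]
  [NormedSpace ℂ B] [IsScalarTower ℂ B B] [SMulCommClass ℂ B B]
  (j : A →L[ℂ] B) (hj_iso : ∀ a, ‖j a‖ = ‖a‖) (hj_ideal : ∀ (b : B) (a : A), b * j a ∈ Set.range j)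

noncomputable def idealAction : B →L[ℂ] A →L[ℂ] A :=
  let act b a := (hj_ideal b a).choose
  have hact : ∀ b a, j (act b a) = b * j a := fun b a => (hj_ideal b a).choose_spec
  have hinj : Function.Injective j := (AddMonoidHomClass.isometry_of_norm j hj_iso).injective
  LinearMap.mkContinuous₂
    (LinearMap.mk₂ ℂ act (fun b b' a => hinj (by simp [hact, add_mul]))
      (fun c b a => hinj (by simp [hact, smul_mul_assoc]))
      (fun b a a' => hinj (by simp [hact, mul_add]))
      (fun c b a => hinj (by simp [hact, mul_smul_comm])))
    1 fun b a => by
      simpa [← hj_iso, hact] using norm_mul_le b (j a)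

theorem map_idealAction (b : B) (a : A) : j (idealAction j hj_iso hj_ideal b a) = b * j a :=
  (hj_ideal b a).choose_spec

variable {j} (hj_mul : ∀ a c : A, j (a * c) = j a * j c)
include hj_mul

theorem idealAction_map (a x : A) : idealAction j hj_iso hj_ideal (j a) x = a * x :=
  (AddMonoidHomClass.isometry_of_norm j hj_iso).injective <| by
    rw [map_idealAction, hj_mul]

theorem idealAction_mul_mul (hB : ∀ b d : B, b * d = d * b) (b d : B) (a c : A) :
    idealAction j hj_iso hj_ideal (b * d) (a * c) =
      idealAction j hj_iso hj_ideal b a * idealAction j hj_iso hj_ideal d c :=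
  (AddMonoidHomClass.isometry_of_norm j hj_iso).injective <| by
    simp only [map_idealAction, hj_mul]
    rw [mul_assoc, ← mul_assoc d, hB d (j a)]
    simp only [mul_assoc]

end IdealAction

theorem IsProjTensorProduct.injective_dualMap_idealAction {A B T : Type*} [NonUnitalNormedRing A]
    [NormedSpace ℂ A] [NonUnitalNormedRing B] [NormedSpace ℂ B] [IsScalarTower ℂ B B]
    [SMulCommClass ℂ B B] [NonUnitalNormedRing T] [NormedSpace ℂ T] [IsScalarTower ℂ T T]
    [SMulCommClass ℂ T T] [CompleteSpace T] (P : IsProjTensorProduct A B T)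
    (hT : WeaklyAmenable T) (hTcomm : ∀ s t : T, s * t = t * s) {j : A →L[ℂ] B}
    (hj_iso : ∀ a, ‖j a‖ = ‖a‖) (hj_mul : ∀ a c : A, j (a * c) = j a * j c)
    (hj_ideal : ∀ (b : B) (a : A), b * j a ∈ Set.range j) :
    Function.Injective (P.dualMap (idealAction j hj_iso hj_ideal).flip) := by
  rw [injective_iff_map_eq_zero]
  intro μ hμ
  have hμ_mul : ∀ a c : A, μ (a * c) = 0 := fun a c => by
    simpa [idealAction_map hj_iso hj_ideal hj_mul] using congr($hμ (P.ι c (j a)))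
  ext a
  obtain ⟨β, -, hβ⟩ := exists_dual_vector'' ℂ (j a)
  have hl : P.liftDual (μ.smulRight β) = 0 :=
    hT.dual_eq_zero_of_map_mul_eq_zero hTcomm fun s t => by
      have := P.ext₂ (M := compL ℂ T T ℂ (P.liftDual (μ.smulRight β)) ∘L mul ℂ T) (N := 0)
        (by simp [P.ι_mul, hμ_mul])
      simpa using congr($this s t)
  have : μ a * ‖a‖ = 0 := by simpa [hβ, hj_iso] using congr($hl (P.ι a (j a)))
  rcases mul_eq_zero.1 this with h | h
  · exact h
  · simp [norm_eq_zero.1 (by exact_mod_cast h)]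

/-- `A` is a closed ideal of `B` through the isometric multiplicative embedding `j`. -/
theorem stmt12_general {A B T : Type*} [NonUnitalNormedRing A] [NormedSpace ℂ A] [NonUnitalNormedRing B] [NormedSpace ℂ B] [IsScalarTower ℂ B B] [SMulCommClass ℂ B B] [NonUnitalNormedRing T] [NormedSpace ℂ T] [IsScalarTower ℂ T T] [SMulCommClass ℂ T T] [CompleteSpace T]
    (hBcomm : ∀ x y : B, x * y = y * x)
    (j : A →L[ℂ] B) (hj_iso : ∀ a : A, ‖j a‖ = ‖a‖)
    (hj_mul : ∀ a b : A, j (a * b) = j a * j b)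
    (hj_ideal : ∀ (b : B) (a : A), b * j a ∈ Set.range j)
    (P : IsProjTensorProduct A B T) (hT : WeaklyAmenable T) :
    WeaklyAmenable A := by
  have hAcomm : ∀ a c : A, a * c = c * a := fun a c =>
    (AddMonoidHomClass.isometry_of_norm j hj_iso).injective <| by rw [hj_mul, hj_mul, hBcomm]
  have hTcomm := P.mul_comm hAcomm hBcomm
  exact P.weaklyAmenable_of_injective_dualMap hT hTcomm (idealAction j hj_iso hj_ideal).flip
    (fun a b c d => idealAction_mul_mul hj_iso hj_ideal hj_mul hBcomm b d a c)
    (P.injective_dualMap_idealAction hT hTcomm hj_iso hj_mul hj_ideal)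

/-- if `A` is a closed ideal in a commutative Banach algebra `B`
(encoded by an isometric multiplicative embedding `j : A → B` whose range is an
ideal) and `A ⊗̂ B` is weakly amenable, then `A` is weakly amenable. -/
theorem stmt12 {A B T : Type*} [NonUnitalNormedRing A] [NormedSpace ℂ A] [IsScalarTower ℂ A A] [SMulCommClass ℂ A A] [CompleteSpace A] [NonUnitalNormedRing B] [NormedSpace ℂ B] [IsScalarTower ℂ B B] [SMulCommClass ℂ B B] [CompleteSpace B] [NonUnitalNormedRing T] [NormedSpace ℂ T] [IsScalarTower ℂ T T] [SMulCommClass ℂ T T] [CompleteSpace T]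
    (hBcomm : ∀ x y : B, x * y = y * x)
    (j : A →L[ℂ] B) (hj_iso : ∀ a : A, ‖j a‖ = ‖a‖)
    (hj_mul : ∀ a b : A, j (a * b) = j a * j b)
    (hj_ideal : ∀ (b : B) (a : A), b * j a ∈ Set.range j)
    (P : IsProjTensorProduct A B T) (hT : WeaklyAmenable T) :
    WeaklyAmenable A :=
  stmt12_general hBcomm j hj_iso hj_mul hj_ideal P hT
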